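/- arXiv:1612.02949 — 4 statements merged into one kernel-verified Lean document; each statement's English description precedes it below -/
import Mathlib

section
/- The function Ω satisfies Re Ω(z) ≥ 0 for every z ∈ D, and Im Ω(z) > 0 for every z ∈ D with Im z > 0. -/
open Complex

/-- The set `E_S = [0,∞) ∖ ⋃_{j} (a_j, b_j)` as a subset of `ℝ`. -/
def ESset (g : ℕ) (a b : Fin g → ℝ) : Set ℝ :=
  Set.Ici 0 \ ⋃ j, Set.Ioo (a j) (b j)

/-- The Denjoy domain `D = ℂ ∖ E_S`. -/
def DenjoyD (g : ℕ) (a b : Fin g → ℝ) : Set ℂ :=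
  ((fun x : ℝ => (x : ℂ)) '' ESset g a b)ᶜ

/-! For `Im z > 0` put `θ c = arg (z - c)`, strictly increasing in `c` with values in `(0, π)`;
then `π - θ 0 + ∑ (θ a_j - θ b_j)` is an argument of `-(1/z) ∏ (z - a_j)/(z - b_j)`. Each term of
the sum is `≤ 0`, and by interlacing `∑ (θ b_j - θ a_j) < π - θ 0` since `θ < π`, so this
argument lies in `(0, π)`: `Ω²` maps the upper half-plane into itself and, by conjugation, the
lower one into itself. As `Im Ω² = 2 Re Ω Im Ω`, `Re Ω` vanishes neither off the real axis
nor on `(-∞, 0)`, where `Ω > 0`; so it is positive on the connected set `ℂ ∖ [0, ∞) = -slitPlane`,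
which is dense. -/

open ComplexConjugate

namespace Complex

theorem sub_ofReal_ne_zero_of_im_ne_zero {z : ℂ} (hz : z.im ≠ 0) (c : ℝ) : z - c ≠ 0 :=
  fun h => hz (by simpa using congrArg im h)

theorem im_sq (w : ℂ) : (w ^ 2).im = 2 * w.re * w.im := by
  rw [sq, mul_im]; ring

theorem div_eq_norm_div_mul_exp_arg_sub (w w' : ℂ) :
    w / w' = ↑(‖w‖ / ‖w'‖) * exp (↑(arg w - arg w') * I) := by
  conv_lhs => rw [← norm_mul_exp_arg_mul_I w, ← norm_mul_exp_arg_mul_I w']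
  rw [mul_div_mul_comm, ← exp_sub, ← sub_mul]
  push_cast
  rfl

theorem arg_mem_Ioo_of_im_pos {z : ℂ} (hz : 0 < z.im) : arg z ∈ Set.Ioo 0 Real.pi :=
  ⟨(arg_nonneg_iff.2 hz.le).lt_of_ne' fun h => hz.ne' (arg_eq_zero_iff.1 h).2,
    arg_lt_pi_iff.2 (Or.inr hz.ne')⟩

theorem strictMono_arg_sub_ofReal {z : ℂ} (hz : 0 < z.im) :
    StrictMono fun c : ℝ => arg (z - c) := by
  intro c c' hcc'
  obtain ⟨h0, hπ⟩ := arg_mem_Ioo_of_im_pos (z := z - c) (by simpa using hz)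
  obtain ⟨h0', hπ'⟩ := arg_mem_Ioo_of_im_pos (z := z - c') (by simpa using hz)
  have hsin : ‖z - c‖ * ‖z - c'‖ * Real.sin (arg (z - c') - arg (z - c)) = z.im * (c' - c) := by
    have hc := norm_mul_cos_arg (z - c)
    have hs := norm_mul_sin_arg (z - c)
    have hc' := norm_mul_cos_arg (z - c')
    have hs' := norm_mul_sin_arg (z - c')
    simp only [sub_re, sub_im, ofReal_re, ofReal_im, sub_zero] at hc hs hc' hs'
    rw [Real.sin_sub]
    linear_combination (‖z - c‖ * Real.cos (arg (z - c))) * hs' + z.im * hc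
      - (‖z - c‖ * Real.sin (arg (z - c))) * hc' - (z.re - c') * hs
  have hnorm : 0 < ‖z - c‖ * ‖z - c'‖ :=
    mul_pos (norm_pos_iff.2 (sub_ofReal_ne_zero_of_im_ne_zero hz.ne' c))
      (norm_pos_iff.2 (sub_ofReal_ne_zero_of_im_ne_zero hz.ne' c'))
  by_contra! hle
  nlinarith [Real.sin_nonpos_of_nonpos_of_neg_pi_le (sub_nonpos.2 hle) (by linarith : -Real.pi ≤ _)]

theorem dense_neg_slitPlane : Dense (-slitPlane) := by
  intro z
  rcases lt_or_ge z.im 0 with h | h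
  · exact subset_closure (by simp [mem_slitPlane_iff, h.ne])
  · have hH : {w : ℂ | 0 < w.im} ⊆ -slitPlane := fun w hw => by
      simp [mem_slitPlane_iff, (show 0 < w.im from hw).ne']
    exact closure_mono hH (by rwa [closure_setOfPred_lt_im])

theorem isPreconnected_neg_slitPlane : IsPreconnected (-slitPlane) :=
  (starConvex_one_slitPlane.neg.isPathConnected (by simp)).isConnected.isPreconnected

end Complex

theorem Finset.sum_sub_lt_of_monotone {ι α β : Type*} [LinearOrder ι] [Preorder α]
    [AddCommGroup β] [PartialOrder β] [IsOrderedAddMonoid β] {θ : α → β} (hθ : Monotone θ)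
    {M : β} (hM : ∀ x, θ x < M) {a b : ι → α} (hord : ∀ j k, j < k → b j ≤ a k)
    (s : Finset ι) {lo : α} (hlo : ∀ j ∈ s, lo ≤ a j) :
    ∑ j ∈ s, (θ (b j) - θ (a j)) < M - θ lo := by
  induction s using Finset.induction_on_min generalizing lo with
  | empty => simpa using hM lo
  | insert k t hk ih =>
    rw [Finset.sum_insert fun h => lt_irrefl k (hk k h)]
    calc θ (b k) - θ (a k) + ∑ j ∈ t, (θ (b j) - θ (a j))
        < θ (b k) - θ (a k) + (M - θ (b k)) :=
          add_lt_add_right (ih fun j hj => hord k j (hk j hj)) _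
      _ = M - θ (a k) := by abel
      _ ≤ M - θ lo := sub_le_sub_left (hθ (hlo k (Finset.mem_insert_self k t))) M

theorem IsPreconnected.forall_lt_of_ne {X α : Type*} [TopologicalSpace X] [LinearOrder α]
    [TopologicalSpace α] [OrderClosedTopology α] {s : Set X} (hs : IsPreconnected s)
    {f : X → α} (hf : ContinuousOn f s) {c : α} (hc : ∀ x ∈ s, f x ≠ c) {x₀ : X}
    (hx₀ : x₀ ∈ s) (h : c < f x₀) : ∀ x ∈ s, c < f x := by
  intro x hx
  by_contra! hle
  obtain ⟨y, hy, hyc⟩ := hs.intermediate_value hx hx₀ hf ⟨hle, h.le⟩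
  exact hc y hy hyc

theorem neg_slitPlane_subset_denjoyD (g : ℕ) (a b : Fin g → ℝ) : -slitPlane ⊆ DenjoyD g a b := by
  rintro z hz ⟨x, hx, rfl⟩
  exact not_le.2 (by simpa [mem_slitPlane_iff] using hz) hx.1

section Radicand

variable {ι : Type*} [Fintype ι] (a b : ι → ℝ)

noncomputable def denjoyRadicand (z : ℂ) : ℂ :=
  -(1 / z) * ∏ j, (z - a j) / (z - b j)

theorem denjoyRadicand_eq_ofReal_mul_exp (z : ℂ) :
    denjoyRadicand a b z = ↑(‖z‖⁻¹ * ∏ j, ‖z - a j‖ / ‖z - b j‖) *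
      exp (↑(Real.pi - arg z + ∑ j, (arg (z - a j) - arg (z - b j))) * I) := by
  rw [denjoyRadicand, ← neg_div, div_eq_norm_div_mul_exp_arg_sub,
    Finset.prod_congr rfl fun j _ => div_eq_norm_div_mul_exp_arg_sub _ _,
    Finset.prod_mul_distrib, ← exp_sum]
  simp only [norm_neg, norm_one, arg_neg_one, one_div]
  push_cast
  rw [add_mul, exp_add, Finset.sum_mul]
  ring

theorem denjoyRadicand_conj (z : ℂ) :
    denjoyRadicand a b (conj z) = conj (denjoyRadicand a b z) := by
  simp [denjoyRadicand]

variable [LinearOrder ι] {a b}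

theorem im_denjoyRadicand_pos (hpos : ∀ j, 0 ≤ a j) (hab : ∀ j, a j ≤ b j)
    (hord : ∀ j k, j < k → b j ≤ a k) {z : ℂ} (hz : 0 < z.im) :
    0 < (denjoyRadicand a b z).im := by
  set θ : ℝ → ℝ := fun c => arg (z - c)
  have hθ : StrictMono θ := strictMono_arg_sub_ofReal hz
  have hθπ : ∀ c, θ c ∈ Set.Ioo 0 Real.pi := fun c => arg_mem_Ioo_of_im_pos (by simpa using hz)
  have hne := sub_ofReal_ne_zero_of_im_ne_zero hz.ne'
  have harg : arg z = θ 0 := by simp [θ]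
  have hgaps : ∑ j, (θ (a j) - θ (b j)) ≤ 0 :=
    Finset.sum_nonpos fun j _ => sub_nonpos.2 (hθ.monotone (hab j))
  have hspan : ∑ j, (θ (b j) - θ (a j)) < Real.pi - θ 0 :=
    Finset.sum_sub_lt_of_monotone hθ.monotone (fun c => (hθπ c).2) hord _ fun j _ => hpos j
  rw [denjoyRadicand_eq_ofReal_mul_exp, im_ofReal_mul, exp_ofReal_mul_I_im]
  refine mul_pos (mul_pos ?_ (Finset.prod_pos fun j _ => ?_)) (Real.sin_pos_of_pos_of_lt_pi ?_ ?_)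
  · simpa using hne 0
  · exact div_pos (norm_pos_iff.2 (hne _)) (norm_pos_iff.2 (hne _))
  · rw [Finset.sum_sub_distrib] at hgaps hspan ⊢
    linarith
  · linarith [(hθπ 0).1]

theorem im_denjoyRadicand_neg (hpos : ∀ j, 0 ≤ a j) (hab : ∀ j, a j ≤ b j)
    (hord : ∀ j k, j < k → b j ≤ a k) {z : ℂ} (hz : z.im < 0) :
    (denjoyRadicand a b z).im < 0 := by
  have := im_denjoyRadicand_pos hpos hab hord (z := conj z) (by simpa using hz)
  rwa [denjoyRadicand_conj, conj_im, neg_pos] at this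

theorem re_pos_of_sq_eq_denjoyRadicand (hpos : ∀ j, 0 ≤ a j) (hab : ∀ j, a j ≤ b j)
    (hord : ∀ j k, j < k → b j ≤ a k) {Ω : ℂ → ℂ} (hΩ : ContinuousOn Ω (-slitPlane))
    (hsq : ∀ z : ℂ, z.im ≠ 0 → Ω z ^ 2 = denjoyRadicand a b z)
    (hneg : ∀ x : ℝ, x < 0 → 0 < (Ω x).re) :
    ∀ z ∈ -slitPlane, 0 < (Ω z).re := by
  refine isPreconnected_neg_slitPlane.forall_lt_of_ne (continuous_re.comp_continuousOn hΩ)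
    (fun z hz => ?_) (x₀ := -1) (by simp) (by simpa using hneg (-1) (by norm_num))
  rcases eq_or_ne z.im 0 with him | him
  · obtain ⟨x, rfl⟩ : ∃ x : ℝ, z = x := ⟨z.re, ext rfl (by simpa using him)⟩
    exact (hneg x (by simpa [mem_slitPlane_iff] using hz)).ne'
  · have hrad : (Ω z ^ 2).im ≠ 0 := by
      rw [hsq z him]
      rcases him.lt_or_gt with h | h
      exacts [(im_denjoyRadicand_neg hpos hab hord h).ne,
        (im_denjoyRadicand_pos hpos hab hord h).ne']
    exact fun hre => hrad (by simp [im_sq, show (Ω z).re = 0 from hre])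

end Radicand

theorem stmt5_general (g : ℕ) (a b : Fin g → ℝ)
    (hpos : ∀ j, 0 < a j) (hab : ∀ j, a j < b j)
    (hord : ∀ j k : Fin g, j < k → b j < a k)
    (Ω : ℂ → ℂ)
    (hΩd : DifferentiableOn ℂ Ω (DenjoyD g a b))
    (hΩsq : ∀ z ∈ DenjoyD g a b,
      (Ω z) ^ 2 = -(1 / z) * ∏ j, (z - (a j : ℂ)) / (z - (b j : ℂ)))
    (hΩpos : ∀ x : ℝ, x < 0 → ∃ r : ℝ, 0 < r ∧ Ω (x : ℂ) = r) :
    (∀ z ∈ DenjoyD g a b, 0 ≤ (Ω z).re) ∧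
    (∀ z ∈ DenjoyD g a b, 0 < z.im → 0 < (Ω z).im) := by
  have hpos' : ∀ j, 0 ≤ a j := fun j => (hpos j).le
  have hab' : ∀ j, a j ≤ b j := fun j => (hab j).le
  have hord' : ∀ j k, j < k → b j ≤ a k := fun j k h => (hord j k h).le
  have hS := neg_slitPlane_subset_denjoyD g a b
  have hsq : ∀ z : ℂ, z.im ≠ 0 → Ω z ^ 2 = denjoyRadicand a b z :=
    fun z hz => hΩsq z (hS (by simp [mem_slitPlane_iff, hz]))
  have hre := re_pos_of_sq_eq_denjoyRadicand hpos' hab' hord' (hΩd.continuousOn.mono hS) hsq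
    fun x hx => by obtain ⟨r, hr, h⟩ := hΩpos x hx; simpa [h]
  refine ⟨fun z hz => ?_, fun z _ hz => ?_⟩
  · exact ContinuousWithinAt.closure_le (dense_neg_slitPlane z) continuousWithinAt_const
      (continuous_re.continuousAt.comp_continuousWithinAt ((hΩd.continuousOn z hz).mono hS))
      fun w hw => (hre w hw).le
  · have him := im_denjoyRadicand_pos hpos' hab' hord' hz
    rw [← hsq z hz.ne', im_sq] at him
    exact pos_of_mul_pos_right him (by linarith [hre z (by simp [mem_slitPlane_iff, hz.ne'])])

/-- The branch `Ω` of `√(−(1/z)·∏ (z−a_j)/(z−b_j))` positive on `(−∞,0)` satisfies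
`Re Ω(z) ≥ 0` on all of `D`, and `Im Ω(z) > 0` for `z ∈ D` with `Im z > 0`. -/
theorem stmt5 (g : ℕ) (hg : 1 ≤ g) (a b : Fin g → ℝ)
    (hpos : ∀ j, 0 < a j) (hab : ∀ j, a j < b j)
    (hord : ∀ j k : Fin g, j < k → b j < a k)
    (Ω : ℂ → ℂ)
    (hΩd : DifferentiableOn ℂ Ω (DenjoyD g a b))
    (hΩsq : ∀ z ∈ DenjoyD g a b,
      (Ω z) ^ 2 = -(1 / z) * ∏ j, (z - (a j : ℂ)) / (z - (b j : ℂ)))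
    (hΩpos : ∀ x : ℝ, x < 0 → ∃ r : ℝ, 0 < r ∧ Ω (x : ℂ) = r) :
    (∀ z ∈ DenjoyD g a b, 0 ≤ (Ω z).re) ∧
    (∀ z ∈ DenjoyD g a b, 0 < z.im → 0 < (Ω z).im) :=
  stmt5_general g a b hpos hab hord Ω hΩd hΩsq hΩpos
end

section
/- Let Γ be a countable subgroup of SL(2,ℝ) with −I ∉ Γ, acting on ℝ by Möbius transformations γ·ξ = (γ₁₁ξ + γ₁₂)/(γ₂₁ξ + γ₂₂) (defined off countably many points). Assume there is a Lebesgue-measurable set 𝔼 ⊆ ℝ such that the sets γ·𝔼, γ ∈ Γ, pairwise intersect in Lebesgue-null sets and ℝ ∖ ⋃_{γ∈Γ} γ·𝔼 is Lebesgue-null. Assume further there is a Lebesgue-integrable function f : ℝ → ℝ such that f(ξ) > 0 for almost every ξ ∈ ℝ and, for each γ ∈ Γ, f(γ·ξ) = f(ξ) for almost every ξ. Then for almost every ξ ∈ ℝ the series ∑_{γ∈Γ} 1/(γ₂₁ξ + γ₂₂)² converges (is finite). -/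
/-!
Away from the countably many poles, the Möbius change of variables and the invariance
of `f` give `∫_𝔼 (∑_γ |γ'(ξ)|) f(ξ) dξ = ∑_γ ∫_{γ𝔼} f ≤ ∫_ℝ f < ∞`, because the
translates `γ𝔼` are a.e. disjoint; as `f > 0` a.e. and `|γ'(ξ)| = 1/(γ₂₁ξ + γ₂₂)²`,
the series converges at almost every point of `𝔼`. The cocycle identity
`(γη)'(ξ) = γ'(ηξ) η'(ξ)` makes the set of convergence points `Γ`-invariant, and Möbius
maps preserve null sets, so the a.e. covering by the translates of `𝔼` spreads
convergence to almost all of `ℝ`.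
-/

open MeasureTheory

/-- The Möbius action of `γ ∈ SL(2,ℝ)` on `ℝ`: `γ·ξ = (γ₁₁ξ + γ₁₂)/(γ₂₁ξ + γ₂₂)`. -/
noncomputable def moebius (γ : Matrix.SpecialLinearGroup (Fin 2) ℝ) (ξ : ℝ) : ℝ :=
  (γ.1 0 0 * ξ + γ.1 0 1) / (γ.1 1 0 * ξ + γ.1 1 1)

open scoped MatrixGroups ENNReal

theorem ae_mem_of_mapsTo_of_ae_mem_iUnion_image {α ι : Type*} [MeasurableSpace α] [Countable ι]
    {μ : Measure α} {φ : ι → α → α}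
    (hφ : ∀ i s, μ s = 0 → μ (φ i '' s) = 0) {E T : Set α}
    (hcover : ∀ᵐ x ∂μ, x ∈ ⋃ i, φ i '' E) (hE : ∀ᵐ x ∂μ, x ∈ E → x ∈ T)
    (hT : ∀ i, Set.MapsTo (φ i) T T) : ∀ᵐ x ∂μ, x ∈ T := by
  have hN : μ {x | x ∈ E ∧ x ∉ T} = 0 := by simpa [ae_iff] using hE
  have hN' : ∀ᵐ x ∂μ, ∀ i, x ∉ φ i '' {x | x ∈ E ∧ x ∉ T} :=
    ae_all_iff.2 fun i => measure_eq_zero_iff_ae_notMem.1 (hφ i _ hN)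
  filter_upwards [hcover, hN'] with x hx hxN
  obtain ⟨i, y, hyE, rfl⟩ := Set.mem_iUnion.1 hx
  by_contra hxT
  exact hxN i ⟨y, ⟨hyE, fun hyT => hxT (hT i hyT)⟩, rfl⟩

section Moebius

variable (γ : SL(2, ℝ))

def moebiusDenom (ξ : ℝ) : ℝ := γ.1 1 0 * ξ + γ.1 1 1

@[fun_prop]
theorem measurable_moebiusDenom : Measurable (moebiusDenom γ) := by
  unfold moebiusDenom
  fun_prop

theorem moebius_eq_div_moebiusDenom (ξ : ℝ) :
    moebius γ ξ = (γ.1 0 0 * ξ + γ.1 0 1) / moebiusDenom γ ξ := rfl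

theorem SL2_det_eq_one : γ.1 0 0 * γ.1 1 1 - γ.1 0 1 * γ.1 1 0 = 1 := by
  rw [← Matrix.det_fin_two, γ.2]

theorem moebiusDenom_mul (η : SL(2, ℝ)) {ξ : ℝ} (hξ : moebiusDenom η ξ ≠ 0) :
    moebiusDenom (γ * η) ξ = moebiusDenom γ (moebius η ξ) * moebiusDenom η ξ := by
  simp only [moebiusDenom, moebius, Matrix.SpecialLinearGroup.coe_mul, Matrix.mul_apply,
    Fin.sum_univ_two] at hξ ⊢
  field_simp
  ring

theorem subsingleton_setOf_moebiusDenom_eq_zero :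
    Set.Subsingleton {ξ : ℝ | moebiusDenom γ ξ = 0} := by
  intro x hx y hy
  have hdet := SL2_det_eq_one γ
  simp only [Set.mem_ofPred_eq, moebiusDenom] at hx hy
  have hc : γ.1 1 0 ≠ 0 := by
    rintro hc
    simp only [hc, zero_mul, zero_add] at hy
    simp [hc, hy] at hdet
  exact mul_left_cancel₀ hc (by linarith)

theorem hasDerivAt_moebius {ξ : ℝ} (hξ : moebiusDenom γ ξ ≠ 0) :
    HasDerivAt (moebius γ) (1 / moebiusDenom γ ξ ^ 2) ξ := by
  have hnum : HasDerivAt (fun ξ => γ.1 0 0 * ξ + γ.1 0 1) (γ.1 0 0) ξ := by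
    simpa using ((hasDerivAt_id ξ).const_mul (γ.1 0 0)).add_const (γ.1 0 1)
  have hden : HasDerivAt (fun ξ => γ.1 1 0 * ξ + γ.1 1 1) (γ.1 1 0) ξ := by
    simpa using ((hasDerivAt_id ξ).const_mul (γ.1 1 0)).add_const (γ.1 1 1)
  have hdet : γ.1 0 0 * (γ.1 1 0 * ξ + γ.1 1 1) - (γ.1 0 0 * ξ + γ.1 0 1) * γ.1 1 0 = 1 := by
    linear_combination SL2_det_eq_one γ
  have hderiv := hnum.div hden hξ
  rwa [hdet] at hderiv

theorem injOn_moebius : Set.InjOn (moebius γ) {ξ : ℝ | moebiusDenom γ ξ = 0}ᶜ := by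
  intro x hx y hy hxy
  rw [moebius_eq_div_moebiusDenom, moebius_eq_div_moebiusDenom, div_eq_div_iff hx hy] at hxy
  simp only [moebiusDenom] at hxy
  linear_combination hxy - (x - y) * SL2_det_eq_one γ

theorem measure_setOf_moebiusDenom_eq_zero : volume {ξ : ℝ | moebiusDenom γ ξ = 0} = 0 :=
  (subsingleton_setOf_moebiusDenom_eq_zero γ).measure_zero _

theorem subsingleton_image_moebius_inter_setOf_moebiusDenom_eq_zero (s : Set ℝ) :
    (moebius γ '' (s ∩ {ξ | moebiusDenom γ ξ = 0})).Subsingleton :=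
  ((subsingleton_setOf_moebiusDenom_eq_zero γ).anti Set.inter_subset_right).image _

theorem image_moebius_ae_eq_image_diff (s : Set ℝ) :
    moebius γ '' (s \ {ξ | moebiusDenom γ ξ = 0}) =ᵐ[volume] moebius γ '' s := by
  rw [← Set.sdiff_union_inter s {ξ | moebiusDenom γ ξ = 0}, Set.image_union,
    Set.sdiff_union_inter]
  exact (union_ae_eq_left_of_ae_eq_empty (ae_eq_empty.2
    ((subsingleton_image_moebius_inter_setOf_moebiusDenom_eq_zero γ s).measure_zero _))).symm

theorem measurableSet_image_moebius {s : Set ℝ} (hs : MeasurableSet s) :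
    MeasurableSet (moebius γ '' s) := by
  rw [← Set.sdiff_union_inter s {ξ | moebiusDenom γ ξ = 0}, Set.image_union]
  refine .union ?_ (subsingleton_image_moebius_inter_setOf_moebiusDenom_eq_zero γ s).measurableSet
  have hs' := hs.diff (subsingleton_setOf_moebiusDenom_eq_zero γ).measurableSet
  exact hs'.image_of_continuousOn_injOn
    (fun ξ hξ => (hasDerivAt_moebius γ hξ.2).continuousAt.continuousWithinAt)
    ((injOn_moebius γ).mono (Set.sdiff_subset_compl _ _))

theorem lintegral_image_moebius {s : Set ℝ} (hs : MeasurableSet s) (g : ℝ → ℝ≥0∞) :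
    ∫⁻ x in moebius γ '' s, g x
      = ∫⁻ ξ in s, ENNReal.ofReal (1 / moebiusDenom γ ξ ^ 2) * g (moebius γ ξ) := by
  set s' := s \ {ξ | moebiusDenom γ ξ = 0}
  have hs' : MeasurableSet s' := hs.diff (subsingleton_setOf_moebiusDenom_eq_zero γ).measurableSet
  rw [← setLIntegral_congr (image_moebius_ae_eq_image_diff γ s),
    (setLIntegral_congr
      (sdiff_null_ae_eq_self (s := s) (measure_setOf_moebiusDenom_eq_zero γ))).symm,
    lintegral_image_eq_lintegral_abs_det_fderiv_mul volume hs'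
      (fun ξ hξ => (hasDerivAt_moebius γ hξ.2).hasDerivWithinAt.hasFDerivWithinAt)
      ((injOn_moebius γ).mono (Set.sdiff_subset_compl _ _))]
  refine setLIntegral_congr_fun hs' fun ξ _ => ?_
  rw [ContinuousLinearMap.det_toSpanSingleton, abs_of_nonneg (by positivity)]

theorem measure_image_moebius_eq_zero {s : Set ℝ} (hs : volume s = 0) :
    volume (moebius γ '' s) = 0 := by
  refine measure_mono_null (Set.image_mono (subset_toMeasurable volume s)) ?_
  rw [← setLIntegral_one, lintegral_image_moebius γ (measurableSet_toMeasurable _ _),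
    Measure.restrict_eq_zero.2 (by rwa [measure_toMeasurable]), lintegral_zero_measure]

-- At a pole of `γ * η` both sides vanish, because `1 / 0 = 0`.
theorem one_div_moebiusDenom_moebius_sq (η : SL(2, ℝ)) {ξ : ℝ} (hξ : moebiusDenom η ξ ≠ 0) :
    1 / moebiusDenom γ (moebius η ξ) ^ 2
      = moebiusDenom η ξ ^ 2 * (1 / moebiusDenom (γ * η) ξ ^ 2) := by
  rw [moebiusDenom_mul γ η hξ]
  rcases eq_or_ne (moebiusDenom γ (moebius η ξ)) 0 with h | h
  · simp [h]
  · field_simp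

end Moebius

theorem summable_one_div_moebiusDenom_moebius_sq_iff {Γ : Subgroup SL(2, ℝ)} (η : Γ) {ξ : ℝ}
    (hξ : moebiusDenom η ξ ≠ 0) :
    Summable (fun γ : Γ => 1 / moebiusDenom γ (moebius η ξ) ^ 2)
      ↔ Summable (fun γ : Γ => 1 / moebiusDenom γ ξ ^ 2) := by
  simp_rw [one_div_moebiusDenom_moebius_sq _ _ hξ, summable_mul_left_iff (pow_ne_zero 2 hξ)]
  exact (Equiv.mulRight η).summable_iff (f := fun γ : Γ => 1 / moebiusDenom γ ξ ^ 2)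

section Tiling

variable {ι : Type*} [Countable ι] (γ : ι → SL(2, ℝ)) {E : Set ℝ}

theorem lintegral_tsum_moebiusDenom_mul_le (hE : MeasurableSet E)
    (hdisj : Pairwise (Function.onFun (AEDisjoint volume) fun i => moebius (γ i) '' E))
    {g : ℝ → ℝ≥0∞} (hg : AEMeasurable g)
    (hginv : ∀ i, ∀ᵐ ξ, g (moebius (γ i) ξ) = g ξ) :
    ∫⁻ ξ in E, (∑' i, ENNReal.ofReal (1 / moebiusDenom (γ i) ξ ^ 2)) * g ξ ≤ ∫⁻ ξ, g ξ :=
  calc ∫⁻ ξ in E, (∑' i, ENNReal.ofReal (1 / moebiusDenom (γ i) ξ ^ 2)) * g ξ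
      = ∑' i, ∫⁻ ξ in E, ENNReal.ofReal (1 / moebiusDenom (γ i) ξ ^ 2) * g ξ := by
        simp_rw [← ENNReal.tsum_mul_right]
        exact lintegral_tsum fun i => by fun_prop
    _ = ∑' i, ∫⁻ x in moebius (γ i) '' E, g x := by
        refine tsum_congr fun i => ?_
        rw [lintegral_image_moebius _ hE]
        exact lintegral_congr_ae ((ae_restrict_of_ae (hginv i)).mono fun ξ hξ => by simp only [hξ])
    _ = ∫⁻ x in ⋃ i, moebius (γ i) '' E, g x :=
        (lintegral_iUnion₀ (fun i => (measurableSet_image_moebius _ hE).nullMeasurableSet)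
          hdisj g).symm
    _ ≤ ∫⁻ ξ, g ξ := setLIntegral_le_lintegral _ _

theorem ae_restrict_summable_one_div_moebiusDenom_sq (hE : MeasurableSet E)
    (hdisj : Pairwise (Function.onFun (AEDisjoint volume) fun i => moebius (γ i) '' E))
    {f : ℝ → ℝ} (hf : Integrable f) (hfpos : ∀ᵐ ξ, 0 < f ξ)
    (hfinv : ∀ i, ∀ᵐ ξ, f (moebius (γ i) ξ) = f ξ) :
    ∀ᵐ ξ ∂volume.restrict E, Summable fun i => 1 / moebiusDenom (γ i) ξ ^ 2 := by
  have hginv : ∀ i, ∀ᵐ ξ, ENNReal.ofReal (f (moebius (γ i) ξ)) = ENNReal.ofReal (f ξ) :=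
    fun i => (hfinv i).mono fun ξ hξ => by rw [hξ]
  have hfin := ((lintegral_tsum_moebiusDenom_mul_le γ hE hdisj hf.aemeasurable.ennreal_ofReal
    hginv).trans_lt hf.lintegral_lt_top).ne
  have hae := ae_lt_top' ((Measurable.tsum fun i => by fun_prop).aemeasurable.mul
    hf.aemeasurable.ennreal_ofReal).restrict hfin
  filter_upwards [hae, ae_restrict_of_ae hfpos] with ξ hlt hpos
  have htsum : ∑' i, ENNReal.ofReal (1 / moebiusDenom (γ i) ξ ^ 2) ≠ ∞ := by
    rintro htop
    rw [Pi.mul_apply, htop, ENNReal.top_mul (ENNReal.ofReal_pos.2 hpos).ne'] at hlt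
    exact lt_irrefl _ hlt
  exact (ENNReal.summable_toReal htsum).congr fun i => ENNReal.toReal_ofReal (by positivity)

end Tiling

theorem stmt6_general (Γ : Subgroup (Matrix.SpecialLinearGroup (Fin 2) ℝ))
    (hcount : Countable Γ)
    (𝔼 : Set ℝ) (h𝔼 : MeasurableSet 𝔼)
    (hdisj : ∀ γ ∈ Γ, ∀ γ' ∈ Γ, γ ≠ γ' →
      volume (moebius γ '' 𝔼 ∩ moebius γ' '' 𝔼) = 0)
    (hcover : volume ((Set.univ : Set ℝ) \ ⋃ γ ∈ Γ, moebius γ '' 𝔼) = 0)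
    (f : ℝ → ℝ) (hf : Integrable f)
    (hfpos : ∀ᵐ ξ : ℝ, 0 < f ξ)
    (hfinv : ∀ γ ∈ Γ, ∀ᵐ ξ : ℝ, f (moebius γ ξ) = f ξ) :
    ∀ᵐ ξ : ℝ, Summable (fun γ : Γ =>
      1 / ((γ : Matrix.SpecialLinearGroup (Fin 2) ℝ).1 1 0 * ξ +
            (γ : Matrix.SpecialLinearGroup (Fin 2) ℝ).1 1 1) ^ 2) := by
  set T := {ξ | (∀ γ : Γ, moebiusDenom γ ξ ≠ 0) ∧
    Summable fun γ : Γ => 1 / moebiusDenom γ ξ ^ 2}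
  have hT : ∀ η : Γ, Set.MapsTo (moebius η) T T := by
    rintro η ξ ⟨hpole, hsum⟩
    refine ⟨fun γ hγ => hpole (γ * η) ?_,
      (summable_one_div_moebiusDenom_moebius_sq_iff η (hpole η)).2 hsum⟩
    rw [Subgroup.coe_mul, moebiusDenom_mul _ _ (hpole η), hγ, zero_mul]
  have hnopole : ∀ᵐ ξ, ∀ γ : Γ, moebiusDenom γ ξ ≠ 0 :=
    ae_all_iff.2 fun γ => measure_eq_zero_iff_ae_notMem.1 (measure_setOf_moebiusDenom_eq_zero γ)
  have hsum := ae_restrict_summable_one_div_moebiusDenom_sq (fun γ : Γ => γ.1) h𝔼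
    (fun γ γ' hne => hdisj γ γ.2 γ' γ'.2 (Subtype.coe_ne_coe.2 hne)) hf hfpos
    (fun γ => hfinv γ γ.2)
  have h𝔼T : ∀ᵐ ξ, ξ ∈ 𝔼 → ξ ∈ T := by
    filter_upwards [hnopole, (ae_restrict_iff' h𝔼).1 hsum] with ξ hpole hsum hξ
    exact ⟨hpole, hsum hξ⟩
  have hcover' : ∀ᵐ ξ, ξ ∈ ⋃ γ : Γ, moebius γ '' 𝔼 := by
    rw [Set.iUnion_subtype]
    exact mem_ae_iff.2 (by rwa [Set.compl_eq_univ_sdiff])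
  filter_upwards [ae_mem_of_mapsTo_of_ae_mem_iUnion_image
    (fun γ _ => measure_image_moebius_eq_zero γ.1) hcover' h𝔼T hT] with ξ hξ
  exact hξ.2

/-- If a countable subgroup `Γ ⊆ SL(2,ℝ)` with `−I ∉ Γ` admits a measurable fundamental set
`𝔼 ⊆ ℝ` for its Möbius action on `ℝ` and a positive integrable a.e.-invariant function, then
the series `∑_{γ∈Γ} 1/(γ₂₁ξ + γ₂₂)²` converges for almost every `ξ ∈ ℝ`. -/
theorem stmt6 (Γ : Subgroup (Matrix.SpecialLinearGroup (Fin 2) ℝ))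
    (hcount : Countable Γ)
    (hnegI : ∀ γ ∈ Γ, (γ : Matrix.SpecialLinearGroup (Fin 2) ℝ).1 ≠
      -(1 : Matrix (Fin 2) (Fin 2) ℝ))
    (𝔼 : Set ℝ) (h𝔼 : MeasurableSet 𝔼)
    (hdisj : ∀ γ ∈ Γ, ∀ γ' ∈ Γ, γ ≠ γ' →
      volume (moebius γ '' 𝔼 ∩ moebius γ' '' 𝔼) = 0)
    (hcover : volume ((Set.univ : Set ℝ) \ ⋃ γ ∈ Γ, moebius γ '' 𝔼) = 0)
    (f : ℝ → ℝ) (hf : Integrable f)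
    (hfpos : ∀ᵐ ξ : ℝ, 0 < f ξ)
    (hfinv : ∀ γ ∈ Γ, ∀ᵐ ξ : ℝ, f (moebius γ ξ) = f ξ) :
    ∀ᵐ ξ : ℝ, Summable (fun γ : Γ =>
      1 / ((γ : Matrix.SpecialLinearGroup (Fin 2) ℝ).1 1 0 * ξ +
            (γ : Matrix.SpecialLinearGroup (Fin 2) ℝ).1 1 1) ^ 2) :=
  stmt6_general Γ hcount 𝔼 h𝔼 hdisj hcover f hf hfpos hfinv
end

section
/- Let n ≥ 1, let ζ₀ ∈ 𝕋∖E_T, and let P be an extremal polynomial for the Ahlfors problem on E_T at ζ₀, i.e. deg P ≤ n, |P(ζ)| ≤ 1 for all ζ ∈ E_T, P(ζ₀) = 0, and |P'(ζ₀)| ≥ |Q'(ζ₀)| for every polynomial Q with deg Q ≤ n, |Q| ≤ 1 on E_T and Q(ζ₀) = 0. Then every root of P lies on the unit circle 𝕋, and every root of P is simple (has multiplicity one). -/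
/-!
Write `P = A * V` with `A = X - z` for a root `z` off the circle, or `A = (X - z) ^ 2` for a
multiple root `z` on it. Then `V(ζ₀) = 0`, so a competitor `(A + t W) * V` has derivative
`(A + t W)(ζ₀) * V'(ζ₀)` at `ζ₀`, and `V'(ζ₀) ≠ 0` because `P'(ζ₀) ≠ 0` (compare with the
linear polynomial `(X - ζ₀) / 2`). Since `E_T` lies in a half-plane `Re (conj ζ₀ * ζ) ≤ c < 1`,
there is a `W` with `deg W ≤ deg A`, `Re (W * conj A) ≤ -δ |A|` on `E_T` and
`Re (W * conj A) > 0` at `ζ₀`. For small `t > 0` the competitor is still bounded by `1` on `E_T`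
while `|A + t W|` has grown at `ζ₀`, contradicting extremality.
-/

open Complex Polynomial

def ETset (g : ℕ) (a b : Fin g → ℝ) : Set ℂ :=
  {ζ : ℂ | ‖ζ‖ = 1} \
    ⋃ j, (fun t : ℝ => Complex.exp (t * Complex.I)) '' Set.Ioo (a j) (b j)

open ComplexConjugate

lemma mul_conj_eq_one_of_norm_eq_one {z : ℂ} (hz : ‖z‖ = 1) : z * conj z = 1 := by
  rw [Complex.mul_conj, Complex.normSq_eq_norm_sq, hz]; norm_num

lemma norm_add_ofReal_mul_sq (a w : ℂ) (t : ℝ) :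
    ‖a + t * w‖ ^ 2 = ‖a‖ ^ 2 + 2 * t * (w * conj a).re + t ^ 2 * ‖w‖ ^ 2 := by
  simp only [Complex.sq_norm, Complex.normSq_apply, Complex.add_re, Complex.add_im,
    Complex.mul_re, Complex.mul_im, Complex.ofReal_re, Complex.ofReal_im, Complex.conj_re,
    Complex.conj_im]
  ring

lemma norm_lt_norm_add_ofReal_mul {a w : ℂ} {t : ℝ} (ht : 0 < t) (h : 0 < (w * conj a).re) :
    ‖a‖ < ‖a + t * w‖ := by
  refine lt_of_pow_lt_pow_left₀ 2 (norm_nonneg _) ?_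
  rw [norm_add_ofReal_mul_sq]
  nlinarith [sq_nonneg ‖w‖]

lemma norm_add_ofReal_mul_le {a w : ℂ} {t δ C : ℝ} (ht : 0 < t) (hw : ‖w‖ ≤ C)
    (h : (w * conj a).re ≤ -δ) (htC : t * C ^ 2 ≤ 2 * δ) : ‖a + t * w‖ ≤ ‖a‖ := by
  refine le_of_pow_le_pow_left₀ two_ne_zero (norm_nonneg _) ?_
  rw [norm_add_ofReal_mul_sq]
  have : ‖w‖ ^ 2 ≤ C ^ 2 := pow_le_pow_left₀ (norm_nonneg _) hw 2
  nlinarith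

lemma re_add_mul_conj_sub_eq {ζ : ℂ} (hζ : ‖ζ‖ = 1) (ζ₀ z : ℂ) (v : ℝ) :
    ((ζ₀ + v * z + v * ζ) * conj (ζ - z)).re
      = (conj ζ₀ * ζ).re - (ζ₀ * conj z).re + v * (1 - ‖z‖ ^ 2) := by
  have h : ζ.re * ζ.re + ζ.im * ζ.im = 1 := by
    simpa [Complex.normSq_apply] using congrArg re (mul_conj_eq_one_of_norm_eq_one hζ)
  simp only [Complex.sq_norm, Complex.normSq_apply, Complex.add_re, Complex.add_im,
    Complex.sub_re, Complex.sub_im, Complex.mul_re, Complex.mul_im, Complex.ofReal_re,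
    Complex.ofReal_im, Complex.conj_re, Complex.conj_im]
  linear_combination v * h

lemma neg_mul_mul_conj_sub_sq {z ζ : ℂ} (hz : ‖z‖ = 1) (hζ : ‖ζ‖ = 1) :
    -(z * ζ) * conj ((ζ - z) ^ 2) = (‖ζ - z‖ ^ 2 : ℝ) := by
  rw [Complex.sq_norm, ← Complex.mul_conj, map_pow, map_sub]
  linear_combination ((conj ζ - conj z) * (-z)) * mul_conj_eq_one_of_norm_eq_one hζ
    + ((conj ζ - conj z) * ζ) * mul_conj_eq_one_of_norm_eq_one hz

lemma exists_pos_norm_add_ofReal_mul_mul_le_one {α : Type*} {E : Set α} {a w v : α → ℂ}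
    {M C δ : ℝ} (hM : 0 < M) (hC : 0 < C) (hδ : 0 < δ)
    (hav : ∀ x ∈ E, ‖a x * v x‖ ≤ 1) (hv : ∀ x ∈ E, ‖v x‖ ≤ M) (hw : ∀ x ∈ E, ‖w x‖ ≤ C)
    (hwa : ∀ x ∈ E, (w x * conj (a x)).re ≤ -δ * ‖a x‖) :
    ∃ t : ℝ, 0 < t ∧ ∀ x ∈ E, ‖(a x + t * w x) * v x‖ ≤ 1 := by
  -- Where `a` is small, `t * w` is a small absolute perturbation; elsewhere it points inwards.
  set r := 1 / (2 * M)
  refine ⟨min (r / C) (δ * r / C ^ 2), by positivity, fun x hx => ?_⟩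
  set t := min (r / C) (δ * r / C ^ 2)
  have ht : 0 < t := by positivity
  have htC : t * C ≤ r := by
    have := min_le_left (r / C) (δ * r / C ^ 2)
    rwa [le_div_iff₀ hC] at this
  rw [norm_mul]
  rcases le_or_gt ‖a x‖ r with hnear | hfar
  · calc ‖a x + t * w x‖ * ‖v x‖ ≤ (r + r) * M := by
          refine mul_le_mul ?_ (hv x hx) (norm_nonneg _) (by positivity)
          calc ‖a x + t * w x‖ ≤ ‖a x‖ + t * ‖w x‖ := by
                simpa [abs_of_pos ht] using norm_add_le (a x) (t * w x)
            _ ≤ r + r := by nlinarith [hw x hx]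
      _ = 1 := by simp only [r]; field_simp; ring
  · have htC2 : t * C ^ 2 ≤ 2 * (δ * r) := by
      have := min_le_right (r / C) (δ * r / C ^ 2)
      rw [le_div_iff₀ (by positivity)] at this
      nlinarith [mul_pos hδ (show 0 < r by positivity)]
    have hle : ‖a x + t * w x‖ ≤ ‖a x‖ :=
      norm_add_ofReal_mul_le ht (hw x hx) (by nlinarith [hwa x hx]) htC2
    calc ‖a x + t * w x‖ * ‖v x‖ ≤ ‖a x‖ * ‖v x‖ := by gcongr
      _ ≤ 1 := by simpa [norm_mul] using hav x hx

lemma exists_pos_norm_eval_le_of_isBounded {E : Set ℂ} (hE : Bornology.IsBounded E)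
    (p : ℂ[X]) : ∃ M : ℝ, 0 < M ∧ ∀ ζ ∈ E, ‖p.eval ζ‖ ≤ M := by
  obtain ⟨C, hC⟩ := hE.isCompact_closure.exists_bound_of_continuousOn
    (f := fun ζ => p.eval ζ) p.continuous.continuousOn
  exact ⟨max C 1, by positivity, fun ζ hζ => (hC ζ (subset_closure hζ)).trans (le_max_left _ _)⟩

structure IsAhlforsExtremal (E : Set ℂ) (n : ℕ) (ζ₀ : ℂ) (P : ℂ[X]) : Prop where
  natDegree_le : P.natDegree ≤ n
  norm_eval_le_one : ∀ ζ ∈ E, ‖P.eval ζ‖ ≤ 1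
  eval_eq_zero : P.eval ζ₀ = 0
  norm_derivative_eval_le : ∀ Q : ℂ[X], Q.natDegree ≤ n → (∀ ζ ∈ E, ‖Q.eval ζ‖ ≤ 1) →
    Q.eval ζ₀ = 0 → ‖(derivative Q).eval ζ₀‖ ≤ ‖(derivative P).eval ζ₀‖

namespace IsAhlforsExtremal

variable {E : Set ℂ} {n : ℕ} {ζ₀ : ℂ} {P : ℂ[X]}

theorem derivative_eval_ne_zero (hP : IsAhlforsExtremal E n ζ₀ P) (hn : 1 ≤ n)
    (hE : E ⊆ Metric.sphere 0 1) (hζ₀ : ‖ζ₀‖ = 1) : (derivative P).eval ζ₀ ≠ 0 := by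
  intro h
  have hQ := hP.norm_derivative_eval_le (C (1 / 2) * (X - C ζ₀))
    ((natDegree_C_mul_le _ _).trans (by rwa [natDegree_X_sub_C])) (fun ζ hζ => ?_) (by simp)
  · norm_num [h] at hQ
  · have hζ : ‖ζ‖ = 1 := by simpa using hE hζ
    have : ‖ζ - ζ₀‖ ≤ 2 := (norm_sub_le _ _).trans (by rw [hζ, hζ₀]; norm_num)
    simp only [eval_mul, eval_C, eval_sub, eval_X, norm_mul]
    norm_num
    linarith

theorem norm_eval_le_of_eq_mul (hP : IsAhlforsExtremal E n ζ₀ P)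
    (hP' : (derivative P).eval ζ₀ ≠ 0) {A V B : ℂ[X]} (hPAV : P = A * V)
    (hA : A.eval ζ₀ ≠ 0) (hB : B.natDegree ≤ A.natDegree)
    (hBV : ∀ ζ ∈ E, ‖(B * V).eval ζ‖ ≤ 1) : ‖B.eval ζ₀‖ ≤ ‖A.eval ζ₀‖ := by
  have hV : V.eval ζ₀ = 0 := by
    simpa [hPAV, hA] using hP.eval_eq_zero
  have hA0 : A ≠ 0 := by rintro rfl; simp at hA
  have hV0 : V ≠ 0 := by rintro rfl; simp [hPAV] at hP'
  have hdeg : (B * V).natDegree ≤ n := by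
    calc (B * V).natDegree ≤ B.natDegree + V.natDegree := natDegree_mul_le
      _ ≤ A.natDegree + V.natDegree := by gcongr
      _ = P.natDegree := by rw [hPAV, natDegree_mul hA0 hV0]
      _ ≤ n := hP.natDegree_le
  have h := hP.norm_derivative_eval_le (B * V) hdeg hBV (by simp [hV])
  have hV' : (derivative V).eval ζ₀ ≠ 0 := by
    intro h0; apply hP'; simp [hPAV, hV, h0]
  simp only [hPAV, derivative_mul, eval_add, eval_mul, hV, mul_zero, zero_add, norm_mul] at h
  exact le_of_mul_le_mul_right h (norm_pos_iff.mpr hV')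

theorem re_eval_mul_conj_nonpos (hP : IsAhlforsExtremal E n ζ₀ P)
    (hP' : (derivative P).eval ζ₀ ≠ 0) (hE : Bornology.IsBounded E) {A V W : ℂ[X]}
    (hPAV : P = A * V) (hA : A.eval ζ₀ ≠ 0) (hW : W.natDegree ≤ A.natDegree) {δ : ℝ}
    (hδ : 0 < δ) (hWA : ∀ ζ ∈ E, (W.eval ζ * conj (A.eval ζ)).re ≤ -δ * ‖A.eval ζ‖) :
    (W.eval ζ₀ * conj (A.eval ζ₀)).re ≤ 0 := by
  by_contra! hgain
  obtain ⟨M, hM, hVM⟩ := exists_pos_norm_eval_le_of_isBounded hE V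
  obtain ⟨K, hK, hWK⟩ := exists_pos_norm_eval_le_of_isBounded hE W
  obtain ⟨t, ht, htE⟩ := exists_pos_norm_add_ofReal_mul_mul_le_one hM hK hδ
    (fun ζ hζ => by simpa [hPAV] using hP.norm_eval_le_one ζ hζ) hVM hWK hWA
  have hle := hP.norm_eval_le_of_eq_mul hP' hPAV hA (B := A + C (t : ℂ) * W)
    ((natDegree_add_le _ _).trans (max_le le_rfl ((natDegree_C_mul_le _ _).trans hW)))
    (fun ζ hζ => by simpa using htE ζ hζ)
  have hlt := norm_lt_norm_add_ofReal_mul ht hgain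
  simp only [eval_add, eval_mul, eval_C] at hle
  linarith

theorem norm_eq_one_of_eval_eq_zero (hP : IsAhlforsExtremal E n ζ₀ P)
    (hP' : (derivative P).eval ζ₀ ≠ 0) (hE : E ⊆ Metric.sphere 0 1) (hζ₀ : ‖ζ₀‖ = 1)
    {c : ℝ} (hc : c < 1) (hsep : ∀ ζ ∈ E, (conj ζ₀ * ζ).re ≤ c) {z : ℂ} (hz : P.eval z = 0) :
    ‖z‖ = 1 := by
  by_contra hz1
  obtain ⟨V, hPV⟩ := dvd_iff_isRoot.2 hz
  have hzζ₀ : z ≠ ζ₀ := by rintro rfl; exact hz1 hζ₀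
  set c' := (1 + c) / 2 with hc'
  have hz1' : 1 - ‖z‖ ^ 2 ≠ 0 := by
    intro h; apply hz1; nlinarith [norm_nonneg z]
  set v : ℝ := ((ζ₀ * conj z).re - c') / (1 - ‖z‖ ^ 2)
  have hv : v * (1 - ‖z‖ ^ 2) = (ζ₀ * conj z).re - c' := div_mul_cancel₀ _ hz1'
  have key : ∀ ζ : ℂ, ‖ζ‖ = 1 →
      ((C (ζ₀ + v * z) + C (v : ℂ) * X).eval ζ * conj ((X - C z).eval ζ)).re
        = (conj ζ₀ * ζ).re - c' := by
    intro ζ hζ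
    simp only [eval_add, eval_mul, eval_C, eval_X, eval_sub]
    rw [re_add_mul_conj_sub_eq hζ, hv]
    ring
  have hδ : 0 < (1 - c) / 2 / (1 + ‖z‖) := div_pos (by linarith) (by positivity)
  have h := hP.re_eval_mul_conj_nonpos hP' (Metric.isBounded_sphere.subset hE) hPV
    (W := C (ζ₀ + v * z) + C (v : ℂ) * X)
    (by simpa [sub_eq_zero] using hzζ₀.symm) (by rw [natDegree_X_sub_C]; compute_degree) hδ ?_
  · rw [key ζ₀ hζ₀, mul_comm, mul_conj_eq_one_of_norm_eq_one hζ₀] at h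
    norm_num [c'] at h
    linarith
  · intro ζ hζ
    have hζ1 : ‖ζ‖ = 1 := by simpa using hE hζ
    have hdist : ‖(X - C z).eval ζ‖ ≤ 1 + ‖z‖ := by
      simpa [hζ1] using norm_sub_le ζ z
    rw [key ζ hζ1]
    have : (1 - c) / 2 / (1 + ‖z‖) * ‖(X - C z).eval ζ‖ ≤ (1 - c) / 2 := by
      rw [div_mul_eq_mul_div, div_le_iff₀ (by positivity)]
      nlinarith
    linarith [hsep ζ hζ, hc']

theorem derivative_eval_ne_zero_of_eval_eq_zero (hP : IsAhlforsExtremal E n ζ₀ P)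
    (hP' : (derivative P).eval ζ₀ ≠ 0) (hE : E ⊆ Metric.sphere 0 1) (hζ₀ : ‖ζ₀‖ = 1)
    {c : ℝ} (hc : c < 1) (hsep : ∀ ζ ∈ E, (conj ζ₀ * ζ).re ≤ c) {z : ℂ} (hz1 : ‖z‖ = 1)
    (hz : P.eval z = 0) : (derivative P).eval z ≠ 0 := by
  rcases eq_or_ne z ζ₀ with rfl | hzζ₀
  · exact hP'
  intro hz'
  have hP0 : P ≠ 0 := by rintro rfl; simp at hP'
  obtain ⟨V, hPV⟩ : (X - C z) ^ 2 ∣ P := (le_rootMultiplicity_iff hP0).1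
    ((one_lt_rootMultiplicity_iff_isRoot hP0).2 ⟨hz, hz'⟩)
  set c' := (1 + c) / 2 with hc'
  have key : ∀ ζ : ℂ, ‖ζ‖ = 1 →
      ((C (-z) * X * (C (conj ζ₀) * X - C (c' : ℂ))).eval ζ * conj (((X - C z) ^ 2).eval ζ)).re
        = ‖((X - C z) ^ 2).eval ζ‖ * ((conj ζ₀ * ζ).re - c') := by
    intro ζ hζ
    simp only [eval_mul, eval_sub, eval_C, eval_X, eval_pow, norm_pow]
    rw [show -z * ζ * (conj ζ₀ * ζ - c') * conj ((ζ - z) ^ 2)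
        = -(z * ζ) * conj ((ζ - z) ^ 2) * (conj ζ₀ * ζ - c') by ring,
      neg_mul_mul_conj_sub_sq hz1 hζ, Complex.re_ofReal_mul]
    simp
  have h := hP.re_eval_mul_conj_nonpos hP' (Metric.isBounded_sphere.subset hE) hPV
    (W := C (-z) * X * (C (conj ζ₀) * X - C (c' : ℂ)))
    (by simpa [sub_eq_zero] using hzζ₀.symm)
    (by rw [natDegree_pow, natDegree_X_sub_C]; compute_degree) (δ := (1 - c) / 2)
    (by linarith) ?_
  · rw [key ζ₀ hζ₀, mul_comm (conj ζ₀), mul_conj_eq_one_of_norm_eq_one hζ₀] at h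
    have : 0 < ‖ζ₀ - z‖ ^ 2 := pow_pos (norm_pos_iff.2 (sub_ne_zero.2 hzζ₀.symm)) 2
    norm_num [c'] at h
    nlinarith
  · intro ζ hζ
    have hζ1 : ‖ζ‖ = 1 := by simpa using hE hζ
    rw [key ζ hζ1]
    nlinarith [hsep ζ hζ, norm_nonneg (((X - C z) ^ 2).eval ζ), hc']

end IsAhlforsExtremal

lemma ETset_subset_sphere (g : ℕ) (a b : Fin g → ℝ) : ETset g a b ⊆ Metric.sphere 0 1 :=
  fun _ hζ => mem_sphere_zero_iff_norm.2 hζ.1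

lemma exists_re_conj_mul_le_of_notMem_ETset {g : ℕ} {a b : Fin g → ℝ} (hpos : ∀ j, 0 < a j)
    (hlast : ∀ j, b j < 2 * Real.pi) {ζ₀ : ℂ} (hζ₀T : ‖ζ₀‖ = 1) (hζ₀ : ζ₀ ∉ ETset g a b) :
    ∃ c < 1, ∀ ζ ∈ ETset g a b, (conj ζ₀ * ζ).re ≤ c := by
  obtain ⟨j, t₀, ⟨hat₀, ht₀b⟩, rfl⟩ :
      ∃ j, ∃ t₀ ∈ Set.Ioo (a j) (b j), exp (t₀ * I) = ζ₀ := by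
    simpa [ETset, hζ₀T, and_assoc] using hζ₀
  set d := min (t₀ - a j) (b j - t₀)
  have hd0 : 0 < d := lt_min (by linarith) (by linarith)
  have hdπ : d ≤ Real.pi := by
    have := min_le_left (t₀ - a j) (b j - t₀)
    have := min_le_right (t₀ - a j) (b j - t₀)
    linarith [hpos j, hlast j]
  refine ⟨Real.cos d, by simpa using Real.cos_lt_cos_of_nonneg_of_le_pi le_rfl hdπ hd0,
    fun ζ hζ => ?_⟩
  by_contra! hlt
  set w := conj (exp (t₀ * I)) * ζ
  set θ := arg w
  have hw : exp (θ * I) = w := by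
    have hζ1 : ‖ζ‖ = 1 := hζ.1
    have : ‖w‖ = 1 := by simp [w, hζ1, Complex.norm_exp_ofReal_mul_I]
    simpa [this] using norm_mul_exp_arg_mul_I w
  have hθ : |θ| < d := by
    by_contra! h
    have := Real.cos_le_cos_of_nonneg_of_le_pi hd0.le (abs_arg_le_pi w) h
    rw [Real.cos_abs, ← exp_ofReal_mul_I_re, hw] at this
    linarith
  apply hζ.2
  refine Set.mem_iUnion.2 ⟨j, t₀ + θ, ⟨?_, ?_⟩, ?_⟩
  · linarith [neg_abs_le θ, min_le_left (t₀ - a j) (b j - t₀)]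
  · linarith [le_abs_self θ, min_le_right (t₀ - a j) (b j - t₀)]
  · have h1 := mul_conj_eq_one_of_norm_eq_one (Complex.norm_exp_ofReal_mul_I t₀)
    calc exp (↑(t₀ + θ) * I) = exp (t₀ * I) * w := by
          rw [← hw, ← Complex.exp_add]; push_cast; ring_nf
      _ = ζ := by rw [← mul_assoc, h1, one_mul]

theorem stmt8_general (g : ℕ) (a b : Fin g → ℝ)
    (hpos : ∀ j, 0 < a j) (hlast : ∀ j, b j < 2 * Real.pi)
    (n : ℕ) (hn : 1 ≤ n)
    (ζ₀ : ℂ) (hζ₀T : ‖ζ₀‖ = 1) (hζ₀ : ζ₀ ∉ ETset g a b)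
    (P : Polynomial ℂ) (hdeg : P.natDegree ≤ n)
    (hbd : ∀ ζ ∈ ETset g a b, ‖P.eval ζ‖ ≤ 1)
    (hzero : P.eval ζ₀ = 0)
    (hext : ∀ Q : Polynomial ℂ, Q.natDegree ≤ n →
      (∀ ζ ∈ ETset g a b, ‖Q.eval ζ‖ ≤ 1) → Q.eval ζ₀ = 0 →
      ‖(Polynomial.derivative Q).eval ζ₀‖ ≤
        ‖(Polynomial.derivative P).eval ζ₀‖) :
    ∀ z : ℂ, P.eval z = 0 →
      ‖z‖ = 1 ∧ (Polynomial.derivative P).eval z ≠ 0 := by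
  intro z hz
  have hP : IsAhlforsExtremal (ETset g a b) n ζ₀ P := ⟨hdeg, hbd, hzero, hext⟩
  have hE := ETset_subset_sphere g a b
  have hP' := hP.derivative_eval_ne_zero hn hE hζ₀T
  obtain ⟨c, hc, hsep⟩ := exists_re_conj_mul_le_of_notMem_ETset hpos hlast hζ₀T hζ₀
  have hz1 := hP.norm_eq_one_of_eval_eq_zero hP' hE hζ₀T hc hsep hz
  exact ⟨hz1, hP.derivative_eval_ne_zero_of_eval_eq_zero hP' hE hζ₀T hc hsep hz1 hz⟩

/-- Every root of an extremal polynomial for the Ahlfors problem on a system of arcs `E_T`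
at a point `ζ₀ ∈ 𝕋 ∖ E_T` lies on the unit circle and is simple. -/
theorem stmt8 (g : ℕ) (hg : 1 ≤ g) (a b : Fin g → ℝ)
    (hpos : ∀ j, 0 < a j) (hab : ∀ j, a j < b j)
    (hord : ∀ j k : Fin g, j < k → b j < a k) (hlast : ∀ j, b j < 2 * Real.pi)
    (n : ℕ) (hn : 1 ≤ n)
    (ζ₀ : ℂ) (hζ₀T : ‖ζ₀‖ = 1) (hζ₀ : ζ₀ ∉ ETset g a b)
    (P : Polynomial ℂ) (hdeg : P.natDegree ≤ n)
    (hbd : ∀ ζ ∈ ETset g a b, ‖P.eval ζ‖ ≤ 1)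
    (hzero : P.eval ζ₀ = 0)
    (hext : ∀ Q : Polynomial ℂ, Q.natDegree ≤ n →
      (∀ ζ ∈ ETset g a b, ‖Q.eval ζ‖ ≤ 1) → Q.eval ζ₀ = 0 →
      ‖(Polynomial.derivative Q).eval ζ₀‖ ≤
        ‖(Polynomial.derivative P).eval ζ₀‖) :
    ∀ z : ℂ, P.eval z = 0 →
      ‖z‖ = 1 ∧ (Polynomial.derivative P).eval z ≠ 0 :=
  stmt8_general g a b hpos hlast n hn ζ₀ hζ₀T hζ₀ P hdeg hbd hzero hext
end

section
/- Let z₀ ∈ ℂ with Im z₀ > 0. (i) For x₀ ∈ ℝ, the number (x₀ − z₀)²/z₀ is a nonnegative real number if and only if x₀ = −|z₀|; in particular the Abel–Jacobi-type system for the domain ℂ∖[0,∞) has the unique solution x₀ = −|z₀|. (ii) If λ is the (unique) complex number with Re λ > 0 and z₀ = −λ², then (1/(2·Im z₀)) · |(λ − |λ|)/(λ + |λ|)| = 1 / ((λ + conj(λ))·(√λ + conj(√λ))²), where √ is the principal branch of the square root. -/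
/-! Part (i): comparing imaginary parts in `(x - z)² = r z` forces `r = 2 (Re z - x)`, and then
the real parts give `x² = |z|²`; the sign `r ≥ 0` rules out `x = |z|` since `Re z < |z|` off the
real axis. Part (ii): `(λ - |λ|) / (λ + |λ|) = i Im λ / (|λ| + Re λ)` (the half-angle tangent of
`arg λ`), and `(Re √λ)² = (|λ| + Re λ) / 2`, after which both sides equal
`1 / (4 Re λ (|λ| + Re λ))`. -/

open Complex ComplexConjugate

noncomputable def csqrt (z : ℂ) : ℂ := z ^ ((1 : ℂ)/2)

namespace Complex

theorem ofReal_sub_sq_eq_ofReal_mul_iff {z : ℂ} (hz : z.im ≠ 0) (x r : ℝ) :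
    ((x : ℂ) - z) ^ 2 = r * z ↔ r = 2 * (z.re - x) ∧ x ^ 2 = ‖z‖ ^ 2 := by
  simp only [Complex.ext_iff, sq, mul_re, mul_im, sub_re, sub_im, ofReal_re, ofReal_im]
  constructor
  · rintro ⟨hre, him⟩
    have hr : r = 2 * (z.re - x) :=
      mul_right_cancel₀ hz (by linear_combination -him)
    exact ⟨hr, by linear_combination hre + z.re * hr - sq_norm_sub_sq_re z⟩
  · rintro ⟨hr, hx⟩
    subst hr
    exact ⟨by linear_combination hx + sq_norm_sub_sq_re z, by ring⟩

theorem exists_nonneg_ofReal_sub_sq_div_eq_iff {z : ℂ} (hz : z.im ≠ 0) (x : ℝ) :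
    (∃ r : ℝ, 0 ≤ r ∧ ((x : ℂ) - z) ^ 2 / z = r) ↔ x = -‖z‖ := by
  have hz0 : z ≠ 0 := fun h => hz (by simp [h])
  have hre : |z.re| < ‖z‖ := abs_re_lt_norm.mpr hz
  simp only [div_eq_iff hz0, ofReal_sub_sq_eq_ofReal_mul_iff hz]
  constructor
  · rintro ⟨r, hr, rfl, hx⟩
    rcases sq_eq_sq_iff_eq_or_eq_neg.mp hx with h | h
    · linarith [le_abs_self z.re]
    · exact h
  · rintro rfl
    exact ⟨_, by linarith [neg_abs_le z.re], rfl, by ring⟩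

theorem sub_norm_div_add_norm (l : ℂ) :
    (l - ‖l‖) / (l + ‖l‖) = I * l.im / (‖l‖ + l.re) := by
  by_cases h : ‖l‖ + l.re = 0
  · have him : l.im = 0 :=
      pow_eq_zero_iff two_ne_zero |>.mp
        (by linear_combination -sq_norm_sub_sq_re l + (‖l‖ - l.re) * h)
    have hden : l + ‖l‖ = 0 :=
      ext (by simp only [add_re, ofReal_re, zero_re]; linarith) (by simp [him])
    simp [hden, him]
  · have h' : l + ‖l‖ ≠ 0 := fun h0 => h (by simpa [add_comm] using congrArg re h0)
    rw [div_eq_div_iff h' (by exact_mod_cast h)]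
    apply ext
    · simp only [mul_re, sub_re, ofReal_re, add_re, sub_im, ofReal_im, add_im, I_re, I_im, mul_im]
      linear_combination -sq_norm_sub_sq_re l
    · simp [add_comm]

theorem two_mul_re_sq (w : ℂ) : 2 * w.re ^ 2 = ‖w ^ 2‖ + (w ^ 2).re := by
  rw [norm_pow, Complex.sq_norm, normSq_apply]
  simp only [sq, mul_re, add_add_sub_cancel]; ring

theorem norm_sub_norm_div_add_norm (l : ℂ) :
    ‖(l - ‖l‖) / (l + ‖l‖)‖ = |l.im| / (‖l‖ + l.re) := by
  rw [sub_norm_div_add_norm, norm_div, norm_mul, norm_I, one_mul, norm_real, Real.norm_eq_abs,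
    ← ofReal_add, norm_real,
    Real.norm_of_nonneg (by linarith [neg_abs_le l.re, abs_re_le_norm l])]

end Complex

theorem csqrt_sq (z : ℂ) : csqrt z ^ 2 = z := by
  rw [csqrt, one_div]; exact_mod_cast cpow_nat_inv_pow z two_ne_zero

theorem re_csqrt_sq (z : ℂ) : (csqrt z).re ^ 2 = (‖z‖ + z.re) / 2 := by
  have := two_mul_re_sq (csqrt z)
  rw [csqrt_sq] at this
  linarith

/-- Explicit solution of the Abel–Jacobi-type system for `D = ℂ ∖ [0,∞)`:
(i) for `x₀ ∈ ℝ`, `(x₀−z₀)²/z₀` is a nonnegative real number iff `x₀ = −|z₀|`;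
(ii) if `Re λ > 0` and `z₀ = −λ²`, then
`(1/(2·Im z₀))·|(λ−|λ|)/(λ+|λ|)| = 1/((λ+conj λ)·(√λ+conj √λ)²)`. -/
theorem stmt17 (z₀ : ℂ) (hz₀ : 0 < z₀.im) :
    (∀ x₀ : ℝ, (∃ r : ℝ, 0 ≤ r ∧ ((x₀ : ℂ) - z₀) ^ 2 / z₀ = (r : ℂ)) ↔
      x₀ = -‖z₀‖) ∧
    (∀ l : ℂ, 0 < l.re → z₀ = -l ^ 2 →
      ((1 / (2 * z₀.im) *
          ‖(l - (‖l‖ : ℂ)) / (l + (‖l‖ : ℂ))‖ : ℝ) : ℂ)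
        = 1 / ((l + conj l) * (csqrt l + conj (csqrt l)) ^ 2)) := by
  refine ⟨exists_nonneg_ofReal_sub_sq_div_eq_iff hz₀.ne', ?_⟩
  rintro l hl rfl
  have him_neg_sq : (-l ^ 2).im = -(2 * l.re * l.im) := by simp [sq]; ring
  have hl_im : l.im < 0 := by nlinarith
  rw [add_conj, add_conj, ← ofReal_pow, ← ofReal_mul, ← ofReal_one, ← ofReal_div,
    ofReal_inj, norm_sub_norm_div_add_norm, abs_of_neg hl_im, him_neg_sq, mul_pow, re_csqrt_sq]
  field_simp [hl_im.ne]
end
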